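/- With the notation of the guarded composition of operator-valued functions: if every F_k is full (∑_{δ∈Δ_k} F_k(δ)†F_k(δ) = I_H), then the guarded composition F is full: ∑_{(δ_1,...,δ_n)} F(δ_1,...,δ_n)† F(δ_1,...,δ_n) = I_{H_C⊗H}. -/

import Mathlib

noncomputable section
open scoped InnerProductSpace
open Finset

/-- Coordinate model of the tensor product `H_C ⊗ H` along a fixed orthonormal
basis of the `n`-dimensional coin space `H_C`. -/
abbrev TensorSp (n : ℕ) (H : Type*) [NormedAddCommGroup H] [InnerProductSpace ℂ H] : Type _ :=
  PiLp 2 (fun _ : Fin n => H)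

variable {n : ℕ} {H : Type*} [NormedAddCommGroup H] [InnerProductSpace ℂ H]

/-- the pure tensor `c ⊗ ψ`. -/
def pureTensor (c : EuclideanSpace ℂ (Fin n)) (ψ : H) : TensorSp n H :=
  WithLp.toLp 2 (fun i => c i • ψ)

/-- the block-diagonal operator `∑ᵢ |i⟩⟨i| ⊗ Uᵢ`, i.e. the guarded composition of
the `Uᵢ` along the computational basis of the coin space. -/
def blockDiag (U : Fin n → (H →ₗ[ℂ] H)) : TensorSp n H →ₗ[ℂ] TensorSp n H where
  toFun x := WithLp.toLp 2 (fun i => U i (x i))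
  map_add' x y := PiLp.ext fun i => by simp [map_add]
  map_smul' c x := PiLp.ext fun i => by simp [map_smul]

/-- `A ⊗ B` in the coordinate model, `A` acting on the coin space. -/
def tensorOp (A : EuclideanSpace ℂ (Fin n) →ₗ[ℂ] EuclideanSpace ℂ (Fin n))
    (B : H →ₗ[ℂ] H) : TensorSp n H →ₗ[ℂ] TensorSp n H where
  toFun x := WithLp.toLp 2 (fun i => ∑ b : Fin n, A (EuclideanSpace.single b 1) i • B (x b))
  map_add' x y := PiLp.ext fun i => by
    simp [map_add, smul_add, Finset.sum_add_distrib]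
  map_smul' c x := PiLp.ext fun i => by
    simp [map_smul, Finset.smul_sum, smul_comm c]

/-- `A ⊗ I_H`. -/
def tensorLeft (A : EuclideanSpace ℂ (Fin n) →ₗ[ℂ] EuclideanSpace ℂ (Fin n)) :
    TensorSp n H →ₗ[ℂ] TensorSp n H :=
  tensorOp A LinearMap.id

/-- A linear operator is unitary iff it preserves inner products and is bijective. -/
def IsUnitaryOp {E : Type*} [NormedAddCommGroup E] [InnerProductSpace ℂ E]
    (A : E →ₗ[ℂ] E) : Prop :=
  (∀ x y : E, ⟪A x, A y⟫_ℂ = ⟪x, y⟫_ℂ) ∧ Function.Bijective A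

/-- Positive (semidefinite) operator. -/
def IsPosOp {E : Type*} [NormedAddCommGroup E] [InnerProductSpace ℂ E]
    (A : E →ₗ[ℂ] E) : Prop :=
  ∀ x : E, (⟪x, A x⟫_ℂ).im = 0 ∧ 0 ≤ (⟪x, A x⟫_ℂ).re

/-- Löwner order `A ⊑ B`. -/
def Loewner {E : Type*} [NormedAddCommGroup E] [InnerProductSpace ℂ E]
    (A B : E →ₗ[ℂ] E) : Prop :=
  IsPosOp (B - A)

section guarded
variable [FiniteDimensional ℂ H] {Δ : Fin n → Type*} [∀ k, Fintype (Δ k)]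

/-- the coefficients `λ_{kδ}`. -/
def lam (F : ∀ k, Δ k → (H →ₗ[ℂ] H)) (k : Fin n) (δ : Δ k) : ℝ :=
  Real.sqrt ((LinearMap.trace ℂ H (LinearMap.adjoint (F k δ) ∘ₗ F k δ)).re /
    ∑ τ : Δ k, (LinearMap.trace ℂ H (LinearMap.adjoint (F k τ) ∘ₗ F k τ)).re)

/-- the guarded composition `□ᵢ |i⟩ → Fᵢ` of operator-valued functions, evaluated at
`⊕ᵢ δᵢ`. -/
def guardedComp (F : ∀ k, Δ k → (H →ₗ[ℂ] H)) (δ : ∀ k, Δ k) :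
    TensorSp n H →ₗ[ℂ] TensorSp n H where
  toFun x := WithLp.toLp 2 (fun i => (∏ k ∈ Finset.univ.erase i, lam F k (δ k)) • F i (δ i) (x i))
  map_add' x y := PiLp.ext fun i => by simp [map_add, smul_add]
  map_smul' c x := PiLp.ext fun i => by
    simp [map_smul, smul_comm c]

end guarded

/-- partial trace over the coin space of an operator on `H_C ⊗ H`. -/
def coinProj (i : Fin n) : TensorSp n H →ₗ[ℂ] H where
  toFun x := x i
  map_add' _ _ := rfl
  map_smul' _ _ := rfl

def coinIncl (i : Fin n) : H →ₗ[ℂ] TensorSp n H where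
  toFun ψ := WithLp.toLp 2 (Pi.single i ψ)
  map_add' x y := PiLp.ext fun j => by rcases eq_or_ne j i with rfl | h <;> simp [*]
  map_smul' c x := PiLp.ext fun j => by rcases eq_or_ne j i with rfl | h <;> simp [*]

def trCoin (A : TensorSp n H →ₗ[ℂ] TensorSp n H) : H →ₗ[ℂ] H :=
  ∑ i : Fin n, coinProj i ∘ₗ A ∘ₗ coinIncl i

/-- the outer product `|x⟩⟨y|`. -/
def outer {E : Type*} [NormedAddCommGroup E] [InnerProductSpace ℂ E]
    (x y : E) : E →ₗ[ℂ] E :=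
  ((innerSL ℂ y).toLinearMap).smulRight x


/-!
On the coordinate model of `H_C ⊗ H` the guarded composition is block diagonal, with `i`-th block
`(∏_{k ≠ i} λ_{k δ_k}) • F_i(δ_i)`, so `∑_δ F(δ)† F(δ)` is block diagonal with `i`-th block
`∑_δ (∏_{k ≠ i} λ_{k δ_k}²) • F_i(δ_i)† F_i(δ_i)`. Taking the trace of `∑_τ F_k(τ)† F_k(τ) = I`
shows that `∑_τ λ_{kτ}² = 1` (when `H ≠ 0`), so summing out the coordinates `δ_k`, `k ≠ i`,
leaves `∑_τ F_i(τ)† F_i(τ) = I` in every block.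
-/

theorem Fintype.sum_pi_prod_erase_smul {ι : Type*} [Fintype ι] [DecidableEq ι] {Δ : ι → Type*}
    [∀ k, Fintype (Δ k)] {R M : Type*} [CommSemiring R] [AddCommMonoid M] [Module R M]
    (w : ∀ k, Δ k → R) (hw : ∀ k, ∑ τ, w k τ = 1) (i : ι) (g : Δ i → M) :
    ∑ δ : ∀ k, Δ k, (∏ k ∈ univ.erase i, w k (δ k)) • g (δ i) = ∑ τ, g τ := by
  classical
  have hcoef : ∀ τ, ∑ δ : ∀ k, Δ k,
      (if δ i = τ then ∏ k ∈ univ.erase i, w k (δ k) else 0) = 1 := by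
    intro τ
    -- the coefficient of `g τ` is `∏ k, ∑ σ, w' k σ`, with `w i` replaced by the indicator of `τ`
    set w' := Function.update w i fun σ => if σ = τ then 1 else 0
    calc _ = ∑ δ : ∀ k, Δ k, ∏ k, w' k (δ k) := by
          refine Finset.sum_congr rfl fun δ _ => ?_
          rw [← mul_prod_erase _ _ (mem_univ i), Finset.prod_congr rfl fun k hk =>
            show w' k (δ k) = w k (δ k) by simp [w', ne_of_mem_erase hk]]
          simp [w']
      _ = ∏ k, ∑ σ, w' k σ := (Fintype.prod_sum _).symm
      _ = 1 := Finset.prod_eq_one fun k _ => by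
          rcases eq_or_ne k i with rfl | hk
          · simp [w']
          · simp [w', hk, hw]
  calc _ = ∑ δ : ∀ k, Δ k, ∑ τ,
        (if δ i = τ then ∏ k ∈ univ.erase i, w k (δ k) else 0) • g τ := by
        simp
    _ = ∑ τ, g τ := by
        rw [sum_comm]
        simp_rw [← sum_smul, hcoef, one_smul]

theorem LinearMap.adjoint_real_smul {E : Type*} [NormedAddCommGroup E] [InnerProductSpace ℂ E]
    [FiniteDimensional ℂ E] (c : ℝ) (A : E →ₗ[ℂ] E) :
    LinearMap.adjoint (c • A) = c • LinearMap.adjoint A := by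
  rw [← Complex.coe_smul, ← Complex.coe_smul, LinearEquiv.map_smulₛₗ, Complex.conj_ofReal]

theorem LinearMap.re_trace_adjoint_comp_self_nonneg {E : Type*} [NormedAddCommGroup E]
    [InnerProductSpace ℂ E] [FiniteDimensional ℂ E] (A : E →ₗ[ℂ] E) :
    0 ≤ (LinearMap.trace ℂ E (LinearMap.adjoint A ∘ₗ A)).re :=
  (Complex.nonneg_iff.mp A.isPositive_adjoint_comp_self.trace_nonneg).1

@[simp]
theorem blockDiag_apply (U : Fin n → (H →ₗ[ℂ] H)) (x : TensorSp n H) (i : Fin n) :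
    blockDiag U x i = U i (x i) := rfl

theorem blockDiag_comp (U V : Fin n → (H →ₗ[ℂ] H)) :
    blockDiag U ∘ₗ blockDiag V = blockDiag fun i => U i ∘ₗ V i := rfl

theorem blockDiag_id : blockDiag (fun _ : Fin n => (LinearMap.id : H →ₗ[ℂ] H)) = LinearMap.id := rfl

theorem sum_blockDiag {ι : Type*} (s : Finset ι) (U : ι → Fin n → (H →ₗ[ℂ] H)) :
    ∑ a ∈ s, blockDiag (U a) = blockDiag fun i => ∑ a ∈ s, U a i := by
  ext x i
  simp [LinearMap.sum_apply]

theorem adjoint_blockDiag [FiniteDimensional ℂ H] (U : Fin n → (H →ₗ[ℂ] H)) :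
    LinearMap.adjoint (blockDiag U) = blockDiag fun i => LinearMap.adjoint (U i) := by
  refine ((LinearMap.eq_adjoint_iff _ _).mpr fun x y => ?_).symm
  simp [PiLp.inner_apply, LinearMap.adjoint_inner_left]

section guardedComp

variable [FiniteDimensional ℂ H] {Δ : Fin n → Type*} [∀ k, Fintype (Δ k)]

theorem sum_lam_sq_eq_one [Nontrivial H] (F : ∀ k, Δ k → (H →ₗ[ℂ] H)) (k : Fin n)
    (hfull : ∑ δ : Δ k, LinearMap.adjoint (F k δ) ∘ₗ F k δ = LinearMap.id) :
    ∑ τ : Δ k, lam F k τ ^ 2 = 1 := by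
  set t : Δ k → ℝ := fun τ => (LinearMap.trace ℂ H (LinearMap.adjoint (F k τ) ∘ₗ F k τ)).re
  have htotal : ∑ τ, t τ = Module.finrank ℂ H := by
    simpa [t, map_sum, Complex.re_sum] using
      congrArg (fun M => (LinearMap.trace ℂ H M).re) hfull
  have hpos : 0 < ∑ τ, t τ := htotal ▸ Nat.cast_pos.mpr Module.finrank_pos
  have hsq : ∀ τ, lam F k τ ^ 2 = t τ / ∑ σ, t σ := fun τ =>
    Real.sq_sqrt (div_nonneg (LinearMap.re_trace_adjoint_comp_self_nonneg _) hpos.le)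
  rw [sum_congr rfl fun τ _ => hsq τ, ← sum_div, div_self hpos.ne']

theorem guardedComp_eq_blockDiag (F : ∀ k, Δ k → (H →ₗ[ℂ] H)) (δ : ∀ k, Δ k) :
    guardedComp F δ = blockDiag fun i => (∏ k ∈ univ.erase i, lam F k (δ k)) • F i (δ i) := rfl

theorem adjoint_guardedComp_comp_self (F : ∀ k, Δ k → (H →ₗ[ℂ] H)) (δ : ∀ k, Δ k) :
    LinearMap.adjoint (guardedComp F δ) ∘ₗ guardedComp F δ = blockDiag fun i =>
      (∏ k ∈ univ.erase i, lam F k (δ k) ^ 2) • (LinearMap.adjoint (F i (δ i)) ∘ₗ F i (δ i)) := by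
  simp_rw [guardedComp_eq_blockDiag, adjoint_blockDiag, blockDiag_comp,
    LinearMap.adjoint_real_smul, LinearMap.smul_comp, LinearMap.comp_smul, smul_smul,
    ← sq, prod_pow]

end guardedComp

/-- the guarded composition of full operator-valued functions is full. -/
theorem guardedComp_full {n : ℕ} {H : Type*} [NormedAddCommGroup H]
    [InnerProductSpace ℂ H] [FiniteDimensional ℂ H]
    {Δ : Fin n → Type*} [∀ k, Fintype (Δ k)] (F : ∀ k, Δ k → (H →ₗ[ℂ] H))
    (hfull : ∀ k, ∑ δ : Δ k, LinearMap.adjoint (F k δ) ∘ₗ F k δ = LinearMap.id) :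
    ∑ δ : (∀ k, Δ k), LinearMap.adjoint (guardedComp F δ) ∘ₗ guardedComp F δ
      = LinearMap.id := by
  rcases subsingleton_or_nontrivial H with _ | _
  · ext x i
    exact Subsingleton.elim _ _
  simp_rw [adjoint_guardedComp_comp_self, sum_blockDiag, ← blockDiag_id]
  congr 1
  funext i
  rw [← hfull i]
  exact Fintype.sum_pi_prod_erase_smul (fun k τ => lam F k τ ^ 2)
    (fun k => sum_lam_sq_eq_one F k (hfull k)) i fun τ => LinearMap.adjoint (F i τ) ∘ₗ F i τ
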